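/- arXiv:2204.13202 — 4 statements merged into one kernel-verified Lean document; each statement's English description precedes it below -/
import Mathlib

section
/- Let k ⊆ K be a field extension, A a finite-dimensional K-algebra, and S a finite subset of A. Then A descends to a pair A₀/K₀ such that K₀ is an intermediate field k ⊆ K₀ ⊆ K that is finitely generated as a field extension of k, A₀ is a K₀-subalgebra of A, the natural map A₀ ⊗_{K₀} K → A is an isomorphism of K-algebras, and S ⊆ A₀. -/
open scoped TensorProduct

universe u

set_option maxHeartbeats 1000000 in
set_option synthInstance.maxHeartbeats 1000000 in
/-- Let `k ⊆ K` be a field extension, `A` a finite-dimensional `K`-algebra and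
`S` a finite subset of `A`. Then `A` descends to `A₀/K₀` where `K₀` is an intermediate field of
`K/k`, finitely generated over `k`, `A₀` is a `K₀`-subalgebra of `A` containing `S`, and the
natural map `K ⊗_{K₀} A₀ → A` is an isomorphism of `K`-algebras. -/
theorem statement_0 (k K A : Type u) [Field k] [Field K] [Algebra k K]
    [Ring A] [Algebra K A] [FiniteDimensional K A] (S : Finset A) :
    ∃ K₀ : IntermediateField k K, K₀.FG ∧
      ∃ A₀ : Subalgebra K₀ A, (↑S : Set A) ⊆ (A₀ : Set A) ∧
        Function.Bijective
          (Algebra.TensorProduct.lift (Algebra.ofId K A) A₀.val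
            (fun x y => by simpa [Algebra.ofId_apply, Commute, SemiconjBy] using Algebra.commutes x (A₀.val y)) :
            K ⊗[K₀] A₀ →ₐ[K] A) := by
  classical
  set n := Module.finrank K A with hn
  set b : Module.Basis (Fin n) K A := Module.finBasis K A with hb
  set T : Set K := ((Set.range fun p : Fin n × Fin n × Fin n => b.repr (b p.1 * b p.2.1) p.2.2) ∪
      (Set.range fun i => b.repr (1 : A) i)) ∪
      (⋃ s ∈ (S : Set A), Set.range fun i => b.repr s i) with hT
  have hTfin : T.Finite := by
    refine (((Set.finite_range _).union (Set.finite_range _)).union ?_)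
    exact Set.Finite.biUnion S.finite_toSet fun s _ => Set.finite_range _
  set K₀ : IntermediateField k K := IntermediateField.adjoin k T with hK₀
  have hsub : T ⊆ (K₀ : Set K) := IntermediateField.subset_adjoin k T
  refine ⟨K₀, IntermediateField.fg_adjoin_of_finite hTfin, ?_⟩
  set M : Submodule K₀ A := Submodule.span K₀ (Set.range b) with hM
  have hmem : ∀ x : A, (∀ i, b.repr x i ∈ K₀) → x ∈ M := by
    intro x hx
    rw [← b.sum_repr x]
    refine Submodule.sum_mem _ fun i _ => ?_
    have : (⟨b.repr x i, hx i⟩ : K₀) • b i = b.repr x i • b i := by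
      rw [← algebraMap_smul K (⟨b.repr x i, hx i⟩ : K₀) (b i)]
      rfl
    rw [← this]
    exact Submodule.smul_mem _ _ (Submodule.subset_span ⟨i, rfl⟩)
  have hgen : ∀ i j : Fin n, b i * b j ∈ M := fun i j =>
    hmem _ fun l => hsub (Or.inl (Or.inl ⟨(i, j, l), rfl⟩))
  have hone : (1 : A) ∈ M := hmem 1 fun i => hsub (Or.inl (Or.inr ⟨i, rfl⟩))
  have hmul : ∀ x y : A, x ∈ M → y ∈ M → x * y ∈ M := by
    intro x y hx hy
    have h1 : M * M ≤ M := by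
      rw [hM, Submodule.span_mul_span]
      refine Submodule.span_le.2 ?_
      rintro _ ⟨_, ⟨i, rfl⟩, _, ⟨j, rfl⟩, rfl⟩
      exact hgen i j
    exact h1 (Submodule.mul_mem_mul hx hy)
  set A₀ : Subalgebra K₀ A := M.toSubalgebra hone hmul with hA₀
  have hSA : (↑S : Set A) ⊆ (A₀ : Set A) := by
    intro s hs
    exact hmem s fun i => hsub (Or.inr (Set.mem_biUnion hs ⟨i, rfl⟩))
  refine ⟨A₀, hSA, ?_⟩
  -- linear independence of b over K₀
  have hinj : Function.Injective fun r : K₀ => r • (1 : K) := by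
    intro r s h
    exact Subtype.ext (by simpa [Algebra.smul_def] using h)
  have hli : LinearIndependent K₀ (b : Fin n → A) :=
    b.linearIndependent.restrict_scalars hinj
  -- basis of A₀ over K₀
  have hMA : M = Subalgebra.toSubmodule A₀ := rfl
  set b₀ : Module.Basis (Fin n) K₀ A₀ :=
    (Module.Basis.span hli).map (LinearEquiv.ofEq _ _ hMA) with hb₀
  have hb₀c : ∀ i, (b₀ i : A) = b i := by
    intro i
    show ((Module.Basis.span hli i : Submodule.span K₀ (Set.range b)) : A) = b i
    exact congrArg Subtype.val (Module.Basis.span_apply hli i)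
  set bT : Module.Basis (Fin n) K (K ⊗[K₀] A₀) := Algebra.TensorProduct.basis K b₀ with hbT
  set φ : K ⊗[K₀] A₀ →ₐ[K] A :=
    (Algebra.TensorProduct.lift (Algebra.ofId K A) A₀.val
      (fun x y => by simpa [Algebra.ofId_apply, Commute, SemiconjBy] using Algebra.commutes x (A₀.val y))) with hφ
  have hφb : ∀ i, φ (bT i) = b i := by
    intro i
    rw [hbT, Algebra.TensorProduct.basis_apply, hφ, Algebra.TensorProduct.lift_tmul]
    simp [hb₀c i, Algebra.ofId_apply]
  have heq : (φ.toLinearMap : K ⊗[K₀] A₀ →ₗ[K] A) =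
      ((bT.equiv b (Equiv.refl _)).toLinearMap) := by
    refine bT.ext fun i => ?_
    simp [hφb i]
  have hbij : Function.Bijective φ.toLinearMap := by
    rw [heq]
    exact (bT.equiv b (Equiv.refl _)).bijective
  exact hbij
end

section
/- Suppose a finite field extension L/K descends to L₀/K₀, i.e., K₀ ⊆ K is a subfield, L₀/K₀ is a field extension, and L ≅ L₀ ⊗_{K₀} K as K-algebras. Then L/K is a simple extension (generated by a single element over K) if and only if L₀/K₀ is a simple extension. -/
/-!
If `L₀ = K₀(β)`, then `K ⊗[K₀] L₀` is generated as a `K`-algebra by `1 ⊗ β`, so `L = K(e (1 ⊗ β))`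
for the isomorphism `e : K ⊗[K₀] L₀ ≃ L`.
Conversely, by the primitive element theorem it suffices to show that `L₀/K₀` has finitely many
intermediate fields. Since `K` is faithfully flat over `K₀`, base change `M ↦ K ⊗[K₀] M` is
injective on `K₀`-subalgebras of `L₀`, so it embeds the intermediate fields of `L₀/K₀` into the
(finitely many) subalgebras of `K ⊗[K₀] L₀ ≃ L`.
-/

open scoped TensorProduct

universe u

namespace Subalgebra

variable {R A B : Type*} [CommRing R] [Ring A] [Algebra R A] [CommRing B] [Algebra R B]

theorem toSubmodule_baseChange (C : Subalgebra R A) :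
    toSubmodule (C.baseChange B) = (toSubmodule C).baseChange B :=
  rfl

theorem baseChange_injective [Module.FaithfullyFlat R B] :
    Function.Injective (baseChange B : Subalgebra R A → Subalgebra B (B ⊗[R] A)) :=
  fun C D h ↦ toSubmodule_injective <| Submodule.baseChange_injective (A := B) <| by
    rw [← toSubmodule_baseChange, ← toSubmodule_baseChange, h]

end Subalgebra

variable {K₀ K L₀ L : Type*} [Field K₀] [Field K] [Field L₀] [Field L]
  [Algebra K₀ K] [Algebra K₀ L₀] [Algebra K L]

theorem finite_intermediateField_of_algEquiv_baseChange (e : K ⊗[K₀] L₀ ≃ₐ[K] L)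
    [Algebra.IsAlgebraic K L] [Finite (IntermediateField K L)] :
    Finite (IntermediateField K₀ L₀) :=
  have : Finite (Subalgebra K L) := .of_equiv _ subalgebraEquivIntermediateField.symm.toEquiv
  have : Finite (Subalgebra K₀ L₀) := .of_injective _
    ((Subalgebra.map_injective (f := e.toAlgHom) e.injective).comp Subalgebra.baseChange_injective)
  .of_injective _ IntermediateField.toSubalgebra_injective

theorem FiniteDimensional.of_algEquiv_baseChange (e : K ⊗[K₀] L₀ ≃ₐ[K] L)
    [FiniteDimensional K L] : FiniteDimensional K₀ L₀ :=
  have : Module.Finite K (K ⊗[K₀] L₀) := .equiv e.symm.toLinearEquiv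
  .of_finite_tensorProduct_of_faithfullyFlat K

theorem adjoin_simple_eq_top_of_algEquiv_baseChange (e : K ⊗[K₀] L₀ ≃ₐ[K] L) {β : L₀}
    (hβ : IsIntegral K₀ β) (h : IntermediateField.adjoin K₀ {β} = ⊤) :
    IntermediateField.adjoin K {e (1 ⊗ₜ β)} = ⊤ := by
  have h₀ : Algebra.adjoin K₀ {β} = ⊤ := by
    rw [← IntermediateField.adjoin_simple_toSubalgebra_of_isAlgebraic hβ.isAlgebraic, h,
      IntermediateField.top_toSubalgebra]
  have h₁ : Algebra.adjoin K {(1 : K) ⊗ₜ[K₀] β} = ⊤ := by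
    simpa using Algebra.TensorProduct.adjoin_one_tmul_image_eq_top (A := K) {β} h₀
  refine IntermediateField.adjoin_eq_top_of_algebra _ _ ?_
  rw [← Set.image_singleton, ← AlgEquiv.coe_toAlgHom, Algebra.adjoin_image, h₁, Algebra.map_top,
    AlgHom.range_eq_top]
  exact e.surjective

/-- Suppose the finite field extension `L/K` descends to `L₀/K₀`, i.e. `K₀` is
a subfield of `K`, `L₀/K₀` is a field extension and `L ≅ L₀ ⊗_{K₀} K` as `K`-algebras. Then
`L/K` is a simple extension (generated by one element) iff `L₀/K₀` is a simple extension. -/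
theorem statement_5 (K₀ K L₀ L : Type u) [Field K₀] [Field K] [Field L₀] [Field L]
    [Algebra K₀ K] [Algebra K₀ L₀] [Algebra K L] [FiniteDimensional K L]
    (e : Nonempty ((K ⊗[K₀] L₀) ≃ₐ[K] L)) :
    (∃ α : L, IntermediateField.adjoin K {α} = ⊤) ↔
      (∃ β : L₀, IntermediateField.adjoin K₀ {β} = ⊤) := by
  obtain ⟨e⟩ := e
  constructor
  · intro hα
    have := Field.finite_intermediateField_of_exists_primitive_element K L hα
    have := finite_intermediateField_of_algEquiv_baseChange e
    exact Field.exists_primitive_element_of_finite_intermediateField K₀ L₀ ⊤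
  · rintro ⟨β, hβ⟩
    have := FiniteDimensional.of_algEquiv_baseChange e
    exact ⟨e (1 ⊗ₜ β), adjoin_simple_eq_top_of_algEquiv_baseChange e (.of_finite K₀ β) hβ⟩
end

section
/- Let k ⊆ K ⊆ L be fields with [L:K] < ∞. Then lev_k(L/K) = 0 if and only if L embeds over K into the compositum k̄K (the subfield of an algebraic closure of K generated by K and the algebraic closure of k). In particular, if k is algebraically closed, then lev_k(L/K) = 0 if and only if L = K. -/
/-!
A step `E/F` of essential dimension `0` is `F ⊗_{K₀} A₀` with `K₀` algebraic over `k`, so `E`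
is spanned over `F` by elements algebraic over `k`. Along a tower of such steps, `L` therefore
lands in the compositum of `K` with the elements algebraic over `k`; this compositum is algebraic
over `K`, and an embedding of it into `Ω` carries it into `k̄K`.

Conversely, if `L ⊆ K(β₁, …, βᵣ)` with all `βⱼ` algebraic over `k`, adjoin the `βⱼ` one at a
time. Each step is `F[X]/(g)` for the minimal polynomial `g` of `βⱼ` over `F`, whose coefficients
are algebraic over `k` (they are symmetric functions of conjugates of `βⱼ`), so the step descends
to the algebraic extension of `k` they generate. When `k` is algebraically closed, `k̄K = K`.
-/

open scoped TensorProduct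

universe u

/-- The transcendence degree of `E` over `k`, as a cardinal: the supremum of the cardinalities
of algebraically independent subsets of `E`. -/
noncomputable def trdeg (k E : Type u) [CommRing k] [CommRing E] [Algebra k E] : Cardinal :=
  ⨆ s : {s : Set E // AlgebraicIndependent k ((↑) : s → E)}, Cardinal.mk s.1

/-- The `K`-algebra `A` descends to the intermediate field `K₀` of `K/k`: there is a
`K₀`-algebra `A₀` with `A ≅ A₀ ⊗_{K₀} K` as `K`-algebras. -/
def Descends (k : Type u) {K : Type u} (A : Type u) [Field k] [Field K] [Algebra k K]
    [Ring A] [Algebra K A] (K₀ : IntermediateField k K) : Prop :=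
  ∃ (A₀ : Type u) (_ : Ring A₀) (_ : Algebra K₀ A₀),
    Nonempty ((K ⊗[K₀] A₀) ≃ₐ[K] A)

/-- The essential dimension `ed k K A` of a `K`-algebra `A` over the base field `k ⊆ K`:
the minimum of `trdeg k K₀` over all intermediate fields `k ⊆ K₀ ⊆ K` to which `A`
descends. -/
noncomputable def ed (k K A : Type u) [Field k] [Field K] [Algebra k K]
    [Ring A] [Algebra K A] : Cardinal :=
  ⨅ K₀ : {K₀ : IntermediateField k K // Descends k A K₀}, trdeg k K₀.1

/-- `HasLevelLE k K L d`: there is a tower of finite field extensions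
`K = K₀ ⊆ K₁ ⊆ ... ⊆ K_m` (realized as a chain of intermediate fields of an extension
`M/K` starting with the image of `K`) such that `L` embeds into `K_m` over `K` and each step
`Kᵢ/Kᵢ₋₁` satisfies `ed k Kᵢ₋₁ Kᵢ ≤ d`. -/
def HasLevelLE (k K L : Type u) [Field k] [Field K] [Field L]
    [Algebra k K] [Algebra K L] (d : Cardinal) : Prop :=
  ∃ (M : Type u) (_ : Field M) (_ : Algebra k M) (_ : Algebra K M) (_ : IsScalarTower k K M)
    (f : L →ₐ[K] M) (m : ℕ) (c : Fin (m + 1) → IntermediateField k M) (hc : Monotone c),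
    c 0 = (IsScalarTower.toAlgHom k K M).fieldRange ∧
    (∀ x : L, f x ∈ c (Fin.last m)) ∧
    ∀ i : Fin m,
      (letI : Algebra (c i.castSucc) (c i.succ) :=
        (IntermediateField.inclusion (hc (Fin.castSucc_lt_succ : i.castSucc < i.succ).le)).toAlgebra
       letI : Module (c i.castSucc) (c i.succ) := Algebra.toModule
       FiniteDimensional (c i.castSucc) (c i.succ)) ∧
      @ed k (c i.castSucc) (c i.succ) _ _ _ _
        (IntermediateField.inclusion (hc (Fin.castSucc_lt_succ : i.castSucc < i.succ).le)).toAlgebra ≤ d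

/-- The level `lev k K L` of the finite field extension `L/K` relative to the base field `k`:
the smallest `d` admitting a tower as in `HasLevelLE`. -/
noncomputable def lev (k K L : Type u) [Field k] [Field K] [Field L]
    [Algebra k K] [Algebra K L] : Cardinal :=
  sInf {d : Cardinal | HasLevelLE k K L d}

open IntermediateField Polynomial

theorem isIntegral_coeff_minpoly {k F Ω : Type u} [Field k] [Field F] [Field Ω] [Algebra k F]
    [Algebra F Ω] [Algebra k Ω] [IsScalarTower k F Ω] {x : Ω} (hx : IsIntegral k x) (n : ℕ) :
    IsIntegral k ((minpoly F x).coeff n) :=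
  isIntegral_coeff_of_dvd _ _ (minpoly.monic hx) (minpoly.monic hx.tower_top)
    (minpoly.dvd_map_of_isScalarTower k F x) n

theorem algHom_apply_mem_of_forall_basis_mem {K L Ω ι : Type*} [Field K] [Field L] [Field Ω]
    [Algebra K L] [Algebra K Ω] [Fintype ι] (b : Module.Basis ι K L) (f : L →ₐ[K] Ω)
    {N : IntermediateField K Ω} (h : ∀ i, f (b i) ∈ N) (x : L) : f x ∈ N := by
  rw [← b.sum_repr x, map_sum]
  exact sum_mem fun i _ => by rw [map_smul]; exact N.smul_mem (h i)

section Trdeg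

variable {k E : Type u} [CommRing k] [CommRing E] [Algebra k E]

theorem trdeg_eq_zero_iff_isAlgebraic : trdeg k E = 0 ↔ Algebra.IsAlgebraic k E := by
  refine ⟨fun h => ⟨fun x => ?_⟩, fun h => ?_⟩
  · by_contra hx
    have hs : AlgebraicIndependent k ((↑) : ({x} : Set E) → E) :=
      algebraicIndependent_unique_type_iff.mpr hx
    have : (1 : Cardinal) ≤ trdeg k E :=
      le_ciSup_of_le Cardinal.bddAbove_of_small ⟨{x}, hs⟩ (by simp)
    simp [h] at this
  · refine le_antisymm (ciSup_le' fun ⟨s, hs⟩ => ?_) zero_le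
    have : IsEmpty s := ⟨fun x => hs.transcendental x (h.isAlgebraic x.1)⟩
    exact (Cardinal.mk_eq_zero s).le

theorem trdeg_le_mk : trdeg k E ≤ Cardinal.mk E :=
  ciSup_le' fun s => Cardinal.mk_set_le s.1

end Trdeg

section EssentialDimension

variable {k K A : Type u} [Field k] [Field K] [Algebra k K] [Ring A] [Algebra K A]

theorem Descends.of_algEquiv {B : Type u} [Ring B] [Algebra K B] {K₀ : IntermediateField k K}
    (h : Descends k A K₀) (e : A ≃ₐ[K] B) : Descends k B K₀ :=
  let ⟨A₀, _, _, ⟨e₀⟩⟩ := h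
  ⟨A₀, _, _, ⟨e₀.trans e⟩⟩

theorem descends_top : Descends k A (⊤ : IntermediateField k K) := by
  let φ : K ⊗[(⊤ : IntermediateField k K)] A →ₐ[K] A :=
    Algebra.TensorProduct.lift (Algebra.ofId K A) (AlgHom.id _ A) fun x y => Algebra.commutes x y
  have hφ : Function.Bijective (φ ∘ Algebra.TensorProduct.includeRight) := by
    convert Function.bijective_id
    ext a
    exact (Algebra.TensorProduct.lift_tmul _ _ _ 1 a).trans (by simp)
  refine ⟨A, _, _, ⟨AlgEquiv.ofBijective φ ((Function.Bijective.of_comp_iff φ ?_).mp hφ)⟩⟩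
  exact Algebra.TensorProduct.includeRight_bijective topEquiv.bijective

theorem ed_le_trdeg {K₀ : IntermediateField k K} (h : Descends k A K₀) :
    ed k K A ≤ trdeg k K₀ :=
  ciInf_le' (fun K₀ : {K₀ : IntermediateField k K // Descends k A K₀} => trdeg k K₀.1) ⟨K₀, h⟩

theorem ed_eq_zero_iff :
    ed k K A = 0 ↔ ∃ K₀ : IntermediateField k K, Descends k A K₀ ∧ Algebra.IsAlgebraic k K₀ := by
  refine ⟨fun h => ?_, fun ⟨K₀, hK₀, halg⟩ => ?_⟩
  · have : Nonempty {K₀ : IntermediateField k K // Descends k A K₀} := ⟨⟨⊤, descends_top⟩⟩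
    obtain ⟨⟨K₀, hK₀⟩, hmin⟩ :=
      ciInf_mem fun K₀ : {K₀ : IntermediateField k K // Descends k A K₀} => trdeg k K₀.1
    exact ⟨K₀, hK₀, trdeg_eq_zero_iff_isAlgebraic.mp (hmin.trans h)⟩
  · exact nonpos_iff_eq_zero.mp
      ((ed_le_trdeg hK₀).trans (trdeg_eq_zero_iff_isAlgebraic.mpr halg).le)

end EssentialDimension

section Descent

variable {k F : Type u} [Field k] [Field F] [Algebra k F]

theorem descends_adjoinRoot_of_coeff_mem (K₀ : IntermediateField k F) {g : F[X]}
    (hg : ∀ n, g.coeff n ∈ K₀) : Descends k (AdjoinRoot g) K₀ := by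
  obtain ⟨q, rfl⟩ : g ∈ Polynomial.lifts (algebraMap K₀ F) :=
    (lifts_iff_coeff_lifts g).mpr fun n => ⟨⟨_, hg n⟩, rfl⟩
  refine ⟨AdjoinRoot q, _, _, ⟨(AdjoinRoot.tensorAlgEquiv q _ rfl).trans
    (AdjoinRoot.mapAlgEquiv (Algebra.TensorProduct.rid K₀ F F) _ _ ?_)⟩⟩
  rw [Polynomial.map_map]
  convert Associated.refl _ using 2
  ext
  simp [Algebra.smul_def]

variable {A : Type u} [Ring A] [Algebra F A] [Algebra k A] [IsScalarTower k F A]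

theorem mem_span_isIntegral_of_descends [FiniteDimensional F A] {K₀ : IntermediateField k F}
    [Algebra.IsAlgebraic k K₀] (h : Descends k A K₀) (a : A) :
    a ∈ Submodule.span F {x : A | IsIntegral k x} := by
  obtain ⟨A₀, _, _, ⟨e⟩⟩ := h
  have : Module.Finite F (F ⊗[K₀] A₀) := Module.Finite.equiv e.symm.toLinearEquiv
  have : Module.Finite K₀ A₀ := Module.Finite.of_finite_tensorProduct_of_faithfullyFlat F
  obtain ⟨t, rfl⟩ := e.surjective a
  induction t using TensorProduct.induction_on with
  | zero => simp
  | tmul x a₀ =>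
    have hint : IsIntegral K₀ (e (1 ⊗ₜ a₀)) :=
      (IsIntegral.of_finite K₀ a₀).map
        ((e.toAlgHom.restrictScalars K₀).comp Algebra.TensorProduct.includeRight)
    rw [← mul_one x, ← smul_eq_mul, ← TensorProduct.smul_tmul', map_smul]
    exact Submodule.smul_mem _ x (Submodule.subset_span (isIntegral_trans _ hint))
  | add t s ht hs => simpa using add_mem ht hs

end Descent

section Step

variable {k M : Type u} [Field k] [Field M] [Algebra k M] {F E : IntermediateField k M}

theorem nonempty_adjoin_simple_algEquiv_of_eq_sup (hFE : F ≤ E) {β : M}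
    (hE : E = F ⊔ adjoin k {β}) :
    letI : Algebra F E := (inclusion hFE).toAlgebra
    Nonempty (F⟮β⟯ ≃ₐ[F] E) := by
  rw [← restrictScalars_adjoin_eq_sup] at hE
  subst hE
  let : Algebra F (restrictScalars k F⟮β⟯) := (inclusion hFE).toAlgebra
  exact ⟨{ RingEquiv.refl _ with commutes' := fun _ => rfl }⟩

theorem finiteDimensional_of_eq_sup_adjoin_simple (hFE : F ≤ E) {β : M}
    (hβ : IsIntegral F β) (hE : E = F ⊔ adjoin k {β}) :
    letI : Algebra F E := (inclusion hFE).toAlgebra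
    letI : Module F E := Algebra.toModule
    FiniteDimensional F E := by
  let : Algebra F E := (inclusion hFE).toAlgebra
  obtain ⟨e⟩ := nonempty_adjoin_simple_algEquiv_of_eq_sup hFE hE
  have := adjoin.finiteDimensional hβ
  exact e.toLinearEquiv.finiteDimensional

theorem ed_le_trdeg_coeff_of_eq_sup_adjoin_simple (hFE : F ≤ E) {β : M}
    (hβ : IsIntegral F β) (hE : E = F ⊔ adjoin k {β}) :
    @ed k F E _ _ _ _ (inclusion hFE).toAlgebra ≤
      trdeg k (adjoin k (Set.range (minpoly F β).coeff)) := by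
  let : Algebra F E := (inclusion hFE).toAlgebra
  obtain ⟨e⟩ := nonempty_adjoin_simple_algEquiv_of_eq_sup hFE hE
  refine ed_le_trdeg (Descends.of_algEquiv ?_ ((adjoinRootEquivAdjoin F hβ).trans e))
  exact descends_adjoinRoot_of_coeff_mem _ fun n => subset_adjoin _ _ ⟨n, rfl⟩

theorem le_sup_adjoin_isAlgebraic_of_ed_eq_zero (hFE : F ≤ E)
    (hfin : letI : Algebra F E := (inclusion hFE).toAlgebra
            letI : Module F E := Algebra.toModule
            FiniteDimensional F E)
    (hed : @ed k F E _ _ _ _ (inclusion hFE).toAlgebra = 0) :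
    E ≤ F ⊔ adjoin k {y : M | IsAlgebraic k y} := by
  let : Algebra F E := (inclusion hFE).toAlgebra
  have : IsScalarTower k F E := IsScalarTower.of_algebraMap_eq fun _ => rfl
  obtain ⟨K₀, hdesc, halg⟩ := ed_eq_zero_iff.mp hed
  suffices h : ∀ y ∈ Submodule.span F {y : E | IsIntegral k y},
      (y : M) ∈ F ⊔ adjoin k {y : M | IsAlgebraic k y} from
    fun x hx => h ⟨x, hx⟩ (mem_span_isIntegral_of_descends hdesc _)
  intro y hy
  induction hy using Submodule.span_induction with
  | mem y hy =>
    have : IsIntegral k (y : M) := (isIntegral_algebraMap_iff (algebraMap E M).injective).mpr hy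
    exact le_sup_right (α := IntermediateField k M) (subset_adjoin _ _ this.isAlgebraic)
  | zero => exact zero_mem _
  | add y z _ _ hy hz => exact add_mem hy hz
  | smul a y _ hy => exact mul_mem (le_sup_left (α := IntermediateField k M) a.2) hy

end Step

section Tower

variable {k K L Ω : Type u} [Field k] [Field K] [Field L] [Field Ω] [Algebra k K] [Algebra K L]
  [Algebra k Ω] [Algebra K Ω] [IsScalarTower k K Ω]

theorem restrictScalars_adjoin_eq_fieldRange_sup (S : Set Ω) :
    (adjoin K S).restrictScalars k = (IsScalarTower.toAlgHom k K Ω).fieldRange ⊔ adjoin k S := by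
  rw [restrictScalars_adjoin_of_algEquiv (IsScalarTower.toAlgHom k K Ω).equivFieldRange rfl,
    restrictScalars_adjoin_eq_sup]

theorem hasLevelLE_of_forall_mem_adjoin (f : L →ₐ[K] Ω) {r : ℕ} (β : Fin r → Ω)
    (hβ : ∀ j, IsIntegral K (β j)) (hf : ∀ x, f x ∈ adjoin K (Set.range β)) {d : Cardinal}
    (hd : ∀ (F : IntermediateField k Ω) (j : Fin r),
      trdeg k (adjoin k (Set.range (minpoly F (β j)).coeff)) ≤ d) :
    HasLevelLE k K L d := by
  let c : Fin (r + 1) → IntermediateField k Ω := fun i =>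
    (adjoin K (β '' {j | (j : ℕ) < i})).restrictScalars k
  have hc : Monotone c := fun i i' hii' => (restrictScalars_le_iff k).mpr <|
    adjoin.mono _ _ _ (Set.image_mono fun j (hj : (j : ℕ) < i) => lt_of_lt_of_le hj hii')
  have hstep (i : Fin r) : c i.succ = c i.castSucc ⊔ adjoin k {β i} := by
    have : {j : Fin r | (j : ℕ) < i.succ} =
        {j : Fin r | (j : ℕ) < i.castSucc} ∪ {i} := by
      ext j
      simp only [Set.mem_ofPred_eq, Set.mem_union, Set.mem_singleton_iff, Fin.val_succ,
        Fin.val_castSucc, Fin.ext_iff]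
      omega
    simp only [c, restrictScalars_adjoin_eq_fieldRange_sup, this, Set.image_union,
      Set.image_singleton, adjoin_union, sup_assoc]
  refine ⟨Ω, inferInstance, inferInstance, inferInstance, inferInstance, f, r, c, hc, ?_,
    fun x => ?_, fun i => ?_⟩
  · simp [c, restrictScalars_adjoin_eq_fieldRange_sup]
  · have : {j : Fin r | (j : ℕ) < Fin.last r} = Set.univ := Set.eq_univ_of_forall fun j => j.2
    simpa [c, this] using hf x
  · have hint : IsIntegral (c i.castSucc) (β i) :=
      (hβ i).tower_top (A := adjoin K (β '' {j | (j : ℕ) < i.castSucc}))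
    exact ⟨finiteDimensional_of_eq_sup_adjoin_simple _ hint (hstep i),
      (ed_le_trdeg_coeff_of_eq_sup_adjoin_simple _ hint (hstep i)).trans (hd _ i)⟩

end Tower

section Level

variable {k K L Ω : Type u} [Field k] [Field K] [Field L] [Field Ω] [Algebra k K] [Algebra K L]
  [Algebra k Ω] [Algebra K Ω] [IsScalarTower k K Ω]

theorem exists_hasLevelLE [FiniteDimensional K L] (f : L →ₐ[K] Ω) :
    ∃ d, HasLevelLE k K L d := by
  let b := Module.finBasis K L
  refine ⟨Cardinal.mk Ω, hasLevelLE_of_forall_mem_adjoin f (f ∘ b)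
    (fun j => (IsIntegral.of_finite K (b j)).map f)
    (algHom_apply_mem_of_forall_basis_mem b f fun j => subset_adjoin _ _ ⟨j, rfl⟩) fun F j => ?_⟩
  exact trdeg_le_mk.trans
    (Cardinal.mk_le_of_injective (Subtype.val_injective.comp Subtype.val_injective))

theorem hasLevelLE_zero_of_forall_mem_adjoin_isAlgebraic [FiniteDimensional K L]
    (f : L →ₐ[K] Ω) (hf : ∀ x, f x ∈ adjoin K {y : Ω | IsAlgebraic k y}) :
    HasLevelLE k K L 0 := by
  let b := Module.finBasis K L
  choose T hTS hT using fun j => exists_finset_of_mem_adjoin (hf (b j))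
  obtain ⟨r, β, hβ⟩ := (Set.finite_iUnion fun j => (T j).finite_toSet).fin_embedding
  have hβS (j : Fin r) : IsAlgebraic k (β j) := by
    obtain ⟨i, hi⟩ := Set.mem_iUnion.mp (hβ ▸ Set.mem_range_self j)
    exact hTS i hi
  refine hasLevelLE_of_forall_mem_adjoin f β (fun j => ((hβS j).tower_top K).isIntegral)
    (algHom_apply_mem_of_forall_basis_mem b f fun j =>
      adjoin.mono _ _ _ (hβ ▸ Set.subset_iUnion (fun i => (T i : Set Ω)) j) (hT j))
    fun F j => (trdeg_eq_zero_iff_isAlgebraic.mpr (isAlgebraic_adjoin ?_)).le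
  rintro _ ⟨n, rfl⟩
  exact isIntegral_coeff_minpoly (hβS j).isIntegral n

theorem exists_algHom_forall_mem_adjoin_isAlgebraic [IsAlgClosed Ω] {M : Type u} [Field M]
    [Algebra k M] [Algebra K M] [IsScalarTower k K M] (f : L →ₐ[K] M)
    (hf : ∀ x, f x ∈ adjoin K {y : M | IsAlgebraic k y}) :
    ∃ g : L →ₐ[K] Ω, ∀ x, g x ∈ adjoin K {y : Ω | IsAlgebraic k y} := by
  let N := adjoin K {y : M | IsAlgebraic k y}
  have : Algebra.IsAlgebraic K N := isAlgebraic_adjoin fun y hy => (hy.tower_top K).isIntegral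
  have : IsScalarTower k N M := IsScalarTower.of_algebraMap_eq fun _ => rfl
  let ψ : N →ₐ[K] Ω := IsAlgClosed.lift
  have hψ (y : M) (hy : y ∈ N) : ψ ⟨y, hy⟩ ∈ adjoin K {y : Ω | IsAlgebraic k y} := by
    induction hy using adjoin_induction with
    | mem y hy =>
      refine subset_adjoin _ _ (IsAlgebraic.algHom (ψ.restrictScalars k) ?_)
      exact (isAlgebraic_algebraMap_iff (algebraMap N M).injective).mp hy
    | algebraMap y => exact ψ.commutes y ▸ IntermediateField.algebraMap_mem _ y
    | add y z hy hz ihy ihz => exact (map_add ψ ⟨y, hy⟩ ⟨z, hz⟩) ▸ add_mem ihy ihz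
    | inv y hy ih => exact (map_inv₀ ψ ⟨y, hy⟩) ▸ inv_mem ih
    | mul y z hy hz ihy ihz => exact (map_mul ψ ⟨y, hy⟩ ⟨z, hz⟩) ▸ mul_mem ihy ihz
  exact ⟨ψ.comp (f.codRestrict N.toSubalgebra hf), fun x => hψ _ (hf x)⟩

theorem exists_algHom_forall_mem_adjoin_isAlgebraic_of_hasLevelLE_zero [IsAlgClosed Ω]
    (h : HasLevelLE k K L 0) :
    ∃ g : L →ₐ[K] Ω, ∀ x, g x ∈ adjoin K {y : Ω | IsAlgebraic k y} := by
  obtain ⟨M, _, _, _, _, f, m, c, hc, hc0, hf, hstep⟩ := h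
  have hchain (i : Fin (m + 1)) :
      c i ≤ (IsScalarTower.toAlgHom k K M).fieldRange ⊔ adjoin k {y : M | IsAlgebraic k y} := by
    induction i using Fin.induction with
    | zero => exact hc0.le.trans le_sup_left
    | succ i ih =>
      exact (le_sup_adjoin_isAlgebraic_of_ed_eq_zero _ (hstep i).1
        (nonpos_iff_eq_zero.mp (hstep i).2)).trans (sup_le ih le_sup_right)
  refine exists_algHom_forall_mem_adjoin_isAlgebraic f fun x => ?_
  have := hchain _ (hf x)
  rwa [← restrictScalars_adjoin_eq_fieldRange_sup] at this

theorem lev_eq_zero_iff_hasLevelLE_zero (h : ∃ d, HasLevelLE k K L d) :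
    lev k K L = 0 ↔ HasLevelLE k K L 0 :=
  ⟨fun h0 => h0 ▸ csInf_mem h, fun h0 => nonpos_iff_eq_zero.mp (csInf_le' h0)⟩

theorem lev_eq_zero_iff [FiniteDimensional K L] [IsAlgClosed Ω] :
    lev k K L = 0 ↔ ∃ f : L →ₐ[K] Ω, ∀ x, f x ∈ adjoin K {y : Ω | IsAlgebraic k y} := by
  have : Algebra.IsAlgebraic K L := Algebra.IsAlgebraic.of_finite K L
  rw [lev_eq_zero_iff_hasLevelLE_zero (exists_hasLevelLE (IsAlgClosed.lift : L →ₐ[K] Ω))]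
  exact ⟨exists_algHom_forall_mem_adjoin_isAlgebraic_of_hasLevelLE_zero,
    fun ⟨f, hf⟩ => hasLevelLE_zero_of_forall_mem_adjoin_isAlgebraic f hf⟩

theorem adjoin_isAlgebraic_eq_bot [IsAlgClosed k] : adjoin K {y : Ω | IsAlgebraic k y} = ⊥ := by
  refine adjoin_eq_bot_iff.mpr fun y hy => ?_
  obtain ⟨a, rfl⟩ := minpoly.mem_range_of_degree_eq_one k y
    (IsAlgClosed.degree_eq_one_of_irreducible k (minpoly.irreducible hy.isIntegral))
  exact IsScalarTower.algebraMap_apply k K Ω a ▸ IntermediateField.algebraMap_mem _ _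

end Level

theorem exists_algHom_forall_mem_bot_iff {K L Ω : Type*} [Field K] [Field L] [Field Ω]
    [Algebra K L] [Algebra K Ω] :
    (∃ f : L →ₐ[K] Ω, ∀ x, f x ∈ (⊥ : IntermediateField K Ω)) ↔
      Function.Bijective (algebraMap K L) := by
  refine ⟨fun ⟨f, hf⟩ => ⟨(algebraMap K L).injective, fun x => ?_⟩, fun h => ?_⟩
  · obtain ⟨y, hy⟩ := mem_bot.mp (hf x)
    exact ⟨y, f.toRingHom.injective (by simp [hy])⟩
  · let e := AlgEquiv.ofBijective (Algebra.ofId K L) h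
    exact ⟨(Algebra.ofId K Ω).comp e.symm.toAlgHom,
      fun x => IntermediateField.algebraMap_mem ⊥ _⟩

/-- For `k ⊆ K ⊆ L` with `[L:K] < ∞` and `Ω` an algebraic closure of `K`,
`lev_k(L/K) = 0` iff `L` embeds over `K` into the compositum `k̄K ⊆ Ω` (the subfield of `Ω`
generated by `K` and the elements algebraic over `k`). In particular, if `k` is algebraically
closed, then `lev_k(L/K) = 0` iff `L = K`. -/
theorem statement_10 (k K L Ω : Type u) [Field k] [Field K] [Field L] [Field Ω]
    [Algebra k K] [Algebra K L] [FiniteDimensional K L]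
    [Algebra K Ω] [IsAlgClosure K Ω] [Algebra k Ω] [IsScalarTower k K Ω] :
    (lev k K L = 0 ↔
      ∃ f : L →ₐ[K] Ω,
        ∀ x : L, f x ∈ IntermediateField.adjoin K {y : Ω | IsAlgebraic k y}) ∧
    (IsAlgClosed k → (lev k K L = 0 ↔ Function.Bijective (algebraMap K L))) := by
  have : IsAlgClosed Ω := IsAlgClosure.isAlgClosed K
  refine ⟨lev_eq_zero_iff (Ω := Ω), fun _ => ?_⟩
  rw [lev_eq_zero_iff (Ω := Ω), adjoin_isAlgebraic_eq_bot, exists_algHom_forall_mem_bot_iff]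
end

section
/- Let K be a field containing k and L/K a finite field extension. If L/K is a radical extension, or more particularly a purely inseparable extension, then lev_k(L/K) ≤ 1. -/
open scoped TensorProduct

universe u

/-- `L/K` is a radical extension: there is a tower `K = K₀ ⊆ K₁ ⊆ ... ⊆ K_m` with
`L ⊆ K_m`, where each `Kᵢ` is obtained from `Kᵢ₋₁` by adjoining a single element `l`
with `l ^ n ∈ Kᵢ₋₁` for some `n ≥ 1`. -/
def IsRadicalExtension (K L : Type u) [Field K] [Field L] [Algebra K L] : Prop :=
  ∃ (M : Type u) (_ : Field M) (_ : Algebra K M) (f : L →ₐ[K] M)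
    (m : ℕ) (c : Fin (m + 1) → IntermediateField K M) (_ : Monotone c),
    c 0 = ⊥ ∧ (∀ x : L, f x ∈ c (Fin.last m)) ∧
    ∀ i : Fin m, ∃ (l : M) (n : ℕ), 1 ≤ n ∧ l ^ n ∈ c i.castSucc ∧
      c i.succ = c i.castSucc ⊔ IntermediateField.adjoin K {l}

/-! ### Auxiliary results on transcendence -/

section Transcendence

open Polynomial

variable {k F : Type u} [Field k] [Field F] [Algebra k F]

private lemma aux_aeval_mem (x : F) (r : Polynomial k) :
    Polynomial.aeval x r ∈ Algebra.adjoin k {x} := by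
  rw [Algebra.adjoin_singleton_eq_range_aeval]
  exact ⟨r, rfl⟩

/-- `k⟮x⟯` is a fraction field of `k[x]`, so algebraicity over the two coincide. -/
private lemma aux_fr (x y : F) :
    IsAlgebraic ↥(Algebra.adjoin k {x}) y ↔
      IsAlgebraic ↥(IntermediateField.adjoin k {x}) y := by
  letI : Algebra ↥(Algebra.adjoin k {x}) ↥(IntermediateField.adjoin k {x}) :=
    (Subalgebra.inclusion (IntermediateField.algebra_adjoin_le_adjoin k {x})).toAlgebra
  haveI : IsScalarTower ↥(Algebra.adjoin k {x}) ↥(IntermediateField.adjoin k {x}) F :=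
    IsScalarTower.of_algebraMap_eq fun r => rfl
  haveI : IsFractionRing ↥(Algebra.adjoin k {x}) ↥(IntermediateField.adjoin k {x}) := by
    constructor
    constructor
    · rintro ⟨y, hy⟩
      have hy0 : (y : F) ≠ 0 := fun h => nonZeroDivisors.ne_zero hy (Subtype.ext h)
      have : (algebraMap ↥(Algebra.adjoin k {x}) ↥(IntermediateField.adjoin k {x}) y : F) ≠ 0 :=
        hy0
      exact isUnit_iff_ne_zero.mpr fun h => this (by rw [h]; rfl)
    · intro z
      obtain ⟨r, s, hz⟩ := (IntermediateField.mem_adjoin_simple_iff k (z : F)).1 z.2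
      by_cases hs : Polynomial.aeval x s = 0
      · refine ⟨⟨0, 1⟩, ?_⟩
        have : (z : F) = 0 := by rw [hz, hs, div_zero]
        simp only [map_one, mul_one, map_zero]
        exact Subtype.ext (by simpa using this)
      · refine ⟨⟨⟨Polynomial.aeval x r, aux_aeval_mem x r⟩,
          ⟨⟨Polynomial.aeval x s, aux_aeval_mem x s⟩,
            mem_nonZeroDivisors_of_ne_zero (fun h => hs (congrArg Subtype.val h))⟩⟩, ?_⟩
        refine Subtype.ext ?_
        show (z : F) * Polynomial.aeval x s = Polynomial.aeval x r
        rw [hz, div_mul_cancel₀ _ hs]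
    · intro p q h
      refine ⟨1, ?_⟩
      have : (p : F) = q := congrArg (fun (w : ↥(IntermediateField.adjoin k {x})) => (w : F)) h
      simp [Subtype.ext this]
  exact IsFractionRing.isAlgebraic_iff ↥(Algebra.adjoin k {x})
    ↥(IntermediateField.adjoin k {x}) F

private lemma aux_pair_indep {u y : F} (hu : Transcendental k u)
    (hy : Transcendental ↥(IntermediateField.adjoin k {u}) y) :
    AlgebraicIndependent k (fun o : Option Unit => o.elim y fun _ => u) := by
  have hx : AlgebraicIndependent k (fun _ : Unit => u) :=
    algebraicIndependent_unique_type_iff.mpr hu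
  refine (hx.option_iff_transcendental y).2 ?_
  have hrange : Set.range (fun _ : Unit => u) = {u} := Set.range_const
  rw [hrange]
  intro halg
  exact hy ((aux_fr u y).1 halg)

private lemma aux_pair_trans {u y : F}
    (huv : AlgebraicIndependent k (fun o : Option Unit => o.elim y fun _ => u)) :
    Transcendental ↥(IntermediateField.adjoin k {u}) y := by
  have hx : AlgebraicIndependent k (fun _ : Unit => u) := by
    have := huv.comp some (Option.some_injective Unit)
    exact this
  have h := (hx.option_iff_transcendental y).1 huv
  rw [Set.range_const] at h
  intro halg
  exact h ((aux_fr u y).2 halg)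

/-- Exchange: if `u` is transcendental over `k` but algebraic over `k(x)`, then `x` is
algebraic over `k(u)`. -/
private lemma aux_exchange {x u : F} (hu : Transcendental k u)
    (hux : IsAlgebraic ↥(IntermediateField.adjoin k {x}) u) :
    IsAlgebraic ↥(IntermediateField.adjoin k {u}) x := by
  by_contra hx_tr
  have hpair : AlgebraicIndependent k (fun o : Option Unit => o.elim x fun _ => u) :=
    aux_pair_indep hu hx_tr
  have hpair' : AlgebraicIndependent k (fun o : Option Unit => o.elim u fun _ => x) := by
    refine (algebraicIndependent_equiv'
      (⟨fun o => o.elim (some ()) fun _ => none, fun o => o.elim (some ()) fun _ => none,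
        fun o => by rcases o with _ | ⟨⟨⟩⟩ <;> rfl,
        fun o => by rcases o with _ | ⟨⟨⟩⟩ <;> rfl⟩ : Option Unit ≃ Option Unit) ?_).1 hpair
    funext o
    rcases o with _ | ⟨⟨⟩⟩ <;> rfl
  exact aux_pair_trans hpair' hux

set_option maxHeartbeats 1000000 in
set_option synthInstance.maxHeartbeats 400000 in
private lemma aux_no_two {a u v : F}
    (huv : AlgebraicIndependent k (fun o : Option Unit => o.elim v fun _ => u))
    (hu : IsAlgebraic ↥(IntermediateField.adjoin k {a}) u)
    (hv : IsAlgebraic ↥(IntermediateField.adjoin k {a}) v) : False := by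
  have hu_tr : Transcendental k u := huv.transcendental (some ())
  have hv_tr : Transcendental ↥(IntermediateField.adjoin k {u}) v := aux_pair_trans huv
  have ha : IsAlgebraic ↥(IntermediateField.adjoin k {u}) a := aux_exchange hu_tr hu
  -- now v is algebraic over k(u)(a), which is algebraic over k(u)
  letI E₁ : IntermediateField k F := IntermediateField.adjoin k {u}
  letI E₂ : IntermediateField ↥E₁ F := IntermediateField.adjoin ↥E₁ ({a} : Set F)
  have haint : IsIntegral ↥E₁ a := ha.isIntegral
  haveI hfd : FiniteDimensional ↥E₁ ↥E₂ :=
    IntermediateField.adjoin.finiteDimensional haint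
  haveI : Algebra.IsIntegral ↥E₁ ↥E₂ := Algebra.IsIntegral.of_finite _ _
  have hv2 : IsAlgebraic ↥E₂ v := by
    have hle : (IntermediateField.adjoin k {a}).toSubalgebra ≤
        (E₂.restrictScalars k).toSubalgebra := by
      intro w hw
      have hw' : w ∈ IntermediateField.adjoin k {a} := hw
      have hsub : IntermediateField.adjoin k {a} ≤ E₂.restrictScalars k := by
        rw [IntermediateField.adjoin_le_iff]
        intro z hz
        rw [Set.mem_singleton_iff] at hz
        exact Set.mem_of_eq_of_mem hz
          (IntermediateField.subset_adjoin ↥E₁ ({a} : Set F) rfl)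
      exact hsub hw'
    exact IsAlgebraic.tower_top_of_subalgebra_le hle hv
  have hvint : IsIntegral ↥E₁ v := isIntegral_trans (A := ↥E₂) v hv2.isIntegral
  exact hv_tr hvint.isAlgebraic

/-- A subfield of `F` all of whose elements are algebraic over `k(a)` has transcendence
degree at most 1 over `k`. -/
private lemma aux_trdeg_le_one (K₀ : IntermediateField k F) (a : F)
    (halg : ∀ y : ↥K₀, IsAlgebraic ↥(IntermediateField.adjoin k {a}) (y : F)) :
    trdeg k ↥K₀ ≤ 1 := by
  haveI : Nonempty {s : Set ↥K₀ // AlgebraicIndependent k ((↑) : s → ↥K₀)} :=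
    ⟨⟨∅, algebraicIndependent_empty⟩⟩
  refine ciSup_le' ?_
  rintro ⟨s, hs⟩
  rw [Cardinal.mk_le_one_iff_set_subsingleton]
  intro u hu v hv
  by_contra hne
  have hs' : AlgebraicIndependent k (K₀.val ∘ ((↑) : s → ↥K₀)) :=
    hs.map' Subtype.val_injective
  have ginj : Function.Injective
      (fun o : Option Unit => o.elim (⟨v, hv⟩ : s) fun _ => (⟨u, hu⟩ : s)) := by
    rintro (_ | ⟨⟨⟩⟩) (_ | ⟨⟨⟩⟩) h
    · rfl
    · exact absurd (congrArg (fun (w : s) => (w : ↥K₀)) h) (fun hh => hne hh.symm)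
    · exact absurd (congrArg (fun (w : s) => (w : ↥K₀)) h) (fun hh => hne hh)
    · rfl
  have hcomp := hs'.comp
    (fun o : Option Unit => o.elim (⟨v, hv⟩ : s) fun _ => (⟨u, hu⟩ : s)) ginj
  have heq : (K₀.val ∘ ((↑) : s → ↥K₀)) ∘
      (fun o : Option Unit => o.elim (⟨v, hv⟩ : s) fun _ => (⟨u, hu⟩ : s)) =
      fun o : Option Unit => o.elim (v : F) fun _ => (u : F) := by
    funext o; rcases o with _ | ⟨⟨⟩⟩ <;> rfl
  rw [heq] at hcomp
  exact aux_no_two hcomp (halg u) (halg v)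

end Transcendence

/-! ### Coefficients of monic divisors of `Xⁿ - a` -/

section Coeff

open Polynomial

variable {k F : Type u} [Field k] [Field F] [Algebra k F]

private lemma aux_coeff_prod_mem {Ω B : Type u} [Field Ω] [CommRing B] [Algebra B Ω]
    (S : Subalgebra B Ω) (s : Multiset Ω) (h : ∀ r ∈ s, r ∈ S) (i : ℕ) :
    ((s.map fun r => X - C r).prod).coeff i ∈ S := by
  induction s using Multiset.induction_on generalizing i with
  | empty =>
    simp only [Multiset.map_zero, Multiset.prod_zero, coeff_one]
    split
    · exact S.one_mem
    · exact S.zero_mem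
  | cons r t ih =>
    have hr : r ∈ S := h r (Multiset.mem_cons_self r t)
    have ht : ∀ x ∈ t, x ∈ S := fun x hx => h x (Multiset.mem_cons_of_mem hx)
    rw [Multiset.map_cons, Multiset.prod_cons, coeff_mul]
    refine Subalgebra.sum_mem S ?_
    rintro ⟨j, l⟩ -
    refine Subalgebra.mul_mem S ?_ (ih ht l)
    have : ∀ m : ℕ, (X - C r).coeff m ∈ S := by
      intro m
      match m with
      | 0 => simpa using S.neg_mem hr
      | 1 => simpa using S.one_mem
      | (n + 2) => simpa [coeff_X, coeff_C] using S.zero_mem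
    exact this j

private lemma aux_coeff_algebraic (q : Polynomial F) (hq : q.Monic) (n : ℕ) (hn : n ≠ 0)
    (a : F) (hdvd : q ∣ X ^ n - C a) (i : ℕ) :
    IsAlgebraic ↥(IntermediateField.adjoin k {a}) (q.coeff i) := by
  set B := ↥(IntermediateField.adjoin k {a})
  let Ω := AlgebraicClosure F
  suffices h : IsIntegral B (q.coeff i) by exact h.isAlgebraic
  rw [← isIntegral_algHom_iff (IsScalarTower.toAlgHom B F Ω)
    (algebraMap F Ω).injective]
  show IsIntegral B (algebraMap F Ω (q.coeff i))
  have hmap : algebraMap F Ω (q.coeff i) = (q.map (algebraMap F Ω)).coeff i :=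
    (coeff_map _ _).symm
  rw [hmap]
  have hsplits : Splits (q.map (algebraMap F Ω)) :=
    IsAlgClosed.splits (q.map (algebraMap F Ω))
  have hqm : (q.map (algebraMap F Ω)).Monic := hq.map _
  have heq := hsplits.eq_prod_roots_of_monic hqm
  rw [heq]
  have hroots : ∀ r ∈ (q.map (algebraMap F Ω)).roots, IsIntegral B r := by
    intro r hr
    have hroot : (q.map (algebraMap F Ω)).IsRoot r := isRoot_of_mem_roots hr
    have hdvd' : q.map (algebraMap F Ω) ∣ (X ^ n - C a).map (algebraMap F Ω) :=
      Polynomial.map_dvd _ hdvd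
    have hroot2 : ((X ^ n - C a).map (algebraMap F Ω)).IsRoot r := hroot.dvd hdvd'
    have hrn : r ^ n = algebraMap F Ω a := by
      have h := hroot2
      simp only [Polynomial.map_sub, Polynomial.map_pow, Polynomial.map_X, Polynomial.map_C,
        IsRoot.def, eval_sub, eval_pow, eval_X, eval_C] at h
      exact sub_eq_zero.mp h
    refine ⟨X ^ n - C (⟨a, IntermediateField.mem_adjoin_simple_self k a⟩ : B),
      monic_X_pow_sub_C _ hn, ?_⟩
    have hmapa : algebraMap B Ω ⟨a, IntermediateField.mem_adjoin_simple_self k a⟩ =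
        algebraMap F Ω a := by
      rw [IsScalarTower.algebraMap_apply B F Ω]
      rfl
    simp only [Polynomial.eval₂_sub, Polynomial.eval₂_X_pow, Polynomial.eval₂_C, hmapa, hrn,
      sub_self]
  have := aux_coeff_prod_mem (integralClosure B Ω) _ (fun r hr => hroots r hr) i
  exact this

end Coeff

/-! ### Base change of `AdjoinRoot` -/

section TensorAdjoinRoot

open Polynomial

variable {R S : Type u} [CommRing R] [CommRing S] [Algebra R S]

private noncomputable def auxTensorAdjoinRoot (p : Polynomial R) :
    (S ⊗[R] AdjoinRoot p) ≃ₐ[S] AdjoinRoot (p.map (algebraMap R S)) := by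
  refine AlgEquiv.ofAlgHom
    (Algebra.TensorProduct.lift (Algebra.ofId S _)
      (AdjoinRoot.liftAlgHom p (Algebra.ofId R _) (AdjoinRoot.root (p.map (algebraMap R S))) ?_)
      fun a b => Commute.all _ _)
    (AdjoinRoot.liftAlgHom (p.map (algebraMap R S)) (Algebra.ofId S _)
      ((1 : S) ⊗ₜ AdjoinRoot.root p) ?_) ?_ ?_
  · change Polynomial.aeval _ p = 0
    rw [← Polynomial.aeval_map_algebraMap S, Polynomial.aeval_def, AdjoinRoot.algebraMap_eq]
    exact AdjoinRoot.eval₂_root _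
  · change Polynomial.aeval _ (p.map (algebraMap R S)) = 0
    have h1 : ((1 : S) ⊗ₜ[R] AdjoinRoot.root p) =
        (Algebra.TensorProduct.includeRight :
          AdjoinRoot p →ₐ[R] S ⊗[R] AdjoinRoot p) (AdjoinRoot.root p) := rfl
    rw [Polynomial.aeval_map_algebraMap S, h1, Polynomial.aeval_algHom_apply]
    have h2 : (Polynomial.aeval (AdjoinRoot.root p)) p = 0 := by
      rw [Polynomial.aeval_def, AdjoinRoot.algebraMap_eq]
      exact AdjoinRoot.eval₂_root _
    rw [h2, map_zero]
  · apply AdjoinRoot.algHom_ext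
    simp [AdjoinRoot.liftAlgHom_root, Algebra.TensorProduct.lift_tmul]
  · apply Algebra.TensorProduct.ext
    · apply AlgHom.ext
      intro x
      simp [Algebra.TensorProduct.lift_tmul, Algebra.ofId_apply]
    · apply AdjoinRoot.algHom_ext
      simp [AdjoinRoot.liftAlgHom_root, Algebra.TensorProduct.lift_tmul]

end TensorAdjoinRoot

/-! ### Good steps and chains -/

section Steps

open IntermediateField Polynomial

variable {k M : Type u} [Field k] [Field M] [Algebra k M]

/-- A single "good" step in a tower: a finite extension of essential dimension at most 1. -/
def GoodStep (k : Type u) {M : Type u} [Field k] [Field M] [Algebra k M]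
    (F E : IntermediateField k M) : Prop :=
  ∃ h : F ≤ E,
    (letI : Algebra ↥F ↥E := (IntermediateField.inclusion h).toAlgebra
     letI : Module ↥F ↥E := Algebra.toModule
     FiniteDimensional ↥F ↥E) ∧
    @ed k ↥F ↥E _ _ _ _ (IntermediateField.inclusion h).toAlgebra ≤ 1

set_option maxHeartbeats 1600000 in
set_option synthInstance.maxHeartbeats 400000 in
/-- The key step lemma: adjoining an element some power of which lies in the base field is a
good step. -/
lemma goodStep_of_pow_mem (F : IntermediateField k M) (μ : M) (n : ℕ) (hn : 0 < n)
    (ha : μ ^ n ∈ F) : GoodStep k F (F ⊔ IntermediateField.adjoin k {μ}) := by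
  have hres : (IntermediateField.adjoin ↥F ({μ} : Set M)).restrictScalars k =
      F ⊔ IntermediateField.adjoin k {μ} :=
    IntermediateField.restrictScalars_adjoin_eq_sup k F ({μ} : Set M)
  have hint : IsIntegral ↥F μ := by
    refine ⟨X ^ n - C (⟨μ ^ n, ha⟩ : ↥F), monic_X_pow_sub_C _ hn.ne', ?_⟩
    have : algebraMap ↥F M ⟨μ ^ n, ha⟩ = μ ^ n := rfl
    simp [Polynomial.eval₂_sub, this]
  haveI hfd : FiniteDimensional ↥F ↥(IntermediateField.adjoin ↥F ({μ} : Set M)) :=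
    IntermediateField.adjoin.finiteDimensional hint
  rw [show F ⊔ IntermediateField.adjoin k {μ} =
    (IntermediateField.adjoin ↥F ({μ} : Set M)).restrictScalars k from hres.symm]
  have hle' : F ≤ (IntermediateField.adjoin ↥F ({μ} : Set M)).restrictScalars k := by
    rw [hres]; exact le_sup_left
  refine ⟨hle', ?_, ?_⟩
  · exact hfd
  ·
    -- switch to the natural instances on the adjoin
    show @ed k ↥F ↥(IntermediateField.adjoin ↥F ({μ} : Set M)) _ _ _ _ _ ≤ 1
    -- the minimal polynomial of μ over F
    set q := minpoly ↥F μ with hq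
    -- K₀ is generated by the coefficients of q
    set K₀ : IntermediateField k ↥F := IntermediateField.adjoin k (Set.range q.coeff) with hK₀
    -- q lifts to K₀
    have hlift : q ∈ Polynomial.lifts (algebraMap ↥K₀ ↥F) := by
      rw [Polynomial.lifts_iff_coeff_lifts]
      intro i
      exact ⟨⟨q.coeff i, IntermediateField.subset_adjoin _ _ ⟨i, rfl⟩⟩, rfl⟩
    obtain ⟨q₀, hq₀⟩ := (Polynomial.mem_lifts _).1 hlift
    -- descent datum
    have hdesc : Descends k ↥(IntermediateField.adjoin ↥F ({μ} : Set M)) K₀ := by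
      refine ⟨AdjoinRoot q₀, inferInstance, inferInstance, ⟨?_⟩⟩
      have e₁ := auxTensorAdjoinRoot (S := ↥F) q₀
      have e₂ : AdjoinRoot (q₀.map (algebraMap ↥K₀ ↥F)) ≃ₐ[↥F]
          ↥(IntermediateField.adjoin ↥F ({μ} : Set M)) := by
        rw [hq₀]
        exact IntermediateField.adjoinRootEquivAdjoin ↥F hint
      exact e₁.trans e₂
    -- the essential dimension is bounded by trdeg of K₀
    have hle : ed k ↥F ↥(IntermediateField.adjoin ↥F ({μ} : Set M)) ≤ trdeg k ↥K₀ :=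
      ciInf_le (OrderBot.bddBelow _) (⟨K₀, hdesc⟩ :
        {K₀ : IntermediateField k ↥F // Descends k ↥(IntermediateField.adjoin ↥F ({μ} : Set M)) K₀})
    refine hle.trans ?_
    -- coefficients of q are algebraic over k(μ^n)
    have hdvd : q ∣ X ^ n - C (⟨μ ^ n, ha⟩ : ↥F) := by
      apply minpoly.dvd
      have : algebraMap ↥F M ⟨μ ^ n, ha⟩ = μ ^ n := rfl
      simp [Polynomial.eval₂_sub, this]
    have hcoeff : ∀ i, IsAlgebraic
        ↥(IntermediateField.adjoin k {(⟨μ ^ n, ha⟩ : ↥F)}) (q.coeff i) :=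
      aux_coeff_algebraic q (minpoly.monic hint) n hn.ne' _ hdvd
    refine aux_trdeg_le_one K₀ (⟨μ ^ n, ha⟩ : ↥F) ?_
    -- all elements of K₀ are algebraic over k(a)
    set B := ↥(IntermediateField.adjoin k {(⟨μ ^ n, ha⟩ : ↥F)})
    set T : IntermediateField B ↥F :=
      IntermediateField.adjoin B (Set.range q.coeff) with hT
    haveI hTalg : Algebra.IsAlgebraic B ↥T := by
      rw [hT]
      exact IntermediateField.isAlgebraic_adjoin fun x hx => by
        obtain ⟨i, rfl⟩ := hx
        exact (hcoeff i).isIntegral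
    intro y
    have hyT : (y : ↥F) ∈ T := by
      have hsub : K₀ ≤ T.restrictScalars k := by
        rw [hK₀, IntermediateField.adjoin_le_iff]
        intro z hz
        exact IntermediateField.subset_adjoin B _ hz
      exact hsub y.2
    have := hTalg.isAlgebraic ⟨(y : ↥F), hyT⟩
    exact this.algHom T.val

/-- Restriction of scalars turns a sup step over `K` into a sup step over `k`. -/
lemma restrictScalars_sup_adjoin {K : Type u} [Field K] [Algebra k K] [Algebra K M]
    [IsScalarTower k K M] (C : IntermediateField K M) (l : M) :
    (C ⊔ IntermediateField.adjoin K {l}).restrictScalars k =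
      C.restrictScalars k ⊔ IntermediateField.adjoin k {l} := by
  have h1 : (IntermediateField.adjoin ↥C ({l} : Set M)).restrictScalars K =
      C ⊔ IntermediateField.adjoin K {l} :=
    IntermediateField.restrictScalars_adjoin_eq_sup K C ({l} : Set M)
  have h2 : (IntermediateField.adjoin ↥(C.restrictScalars k) ({l} : Set M)).restrictScalars k =
      C.restrictScalars k ⊔ IntermediateField.adjoin k {l} :=
    IntermediateField.restrictScalars_adjoin_eq_sup k (C.restrictScalars k) ({l} : Set M)
  rw [← h2]
  ext x
  rw [IntermediateField.mem_restrictScalars, ← h1]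
  exact Iff.rfl

end Steps

/-! ### Chains from reflexive-transitive closure -/

section Chains

variable {k M : Type u} [Field k] [Field M] [Algebra k M]

lemma exists_chain_of_reflTransGen {F G : IntermediateField k M}
    (h : Relation.ReflTransGen (GoodStep k) F G) :
    ∃ (m : ℕ) (c : Fin (m + 1) → IntermediateField k M) (hc : Monotone c),
      c 0 = F ∧ c (Fin.last m) = G ∧
      ∀ i : Fin m, GoodStep k (c i.castSucc) (c i.succ) := by
  induction h with
  | refl =>
    exact ⟨0, fun _ => F, monotone_const, rfl, rfl, fun i => i.elim0⟩
  | @tail G' G hFG' hstep ih =>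
    obtain ⟨m, c, hc, h0, hl, hs⟩ := ih
    refine ⟨m + 1, fun i => if h : (i : ℕ) ≤ m then c ⟨i, by omega⟩ else G, ?_, ?_, ?_, ?_⟩
    · intro i j hij
      by_cases hi : (i : ℕ) ≤ m <;> by_cases hj : (j : ℕ) ≤ m
      · simp only [dif_pos hi, dif_pos hj]
        exact hc (by exact hij)
      · simp only [dif_pos hi, dif_neg hj]
        calc c ⟨i, by omega⟩ ≤ c (Fin.last m) := hc (by simp [Fin.le_def]; omega)
          _ = G' := hl
          _ ≤ G := hstep.choose
      · exact absurd (le_trans (Fin.le_def.mp hij) hj) hi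
      · simp only [dif_neg hi, dif_neg hj]
        exact le_rfl
    · have h00 : ((0 : Fin (m + 2)) : ℕ) ≤ m := by simp
      simp only [dif_pos h00]
      rw [← h0]
      exact congrArg c (Fin.ext (by simp))
    · have hlast : ¬ ((Fin.last (m + 1) : Fin (m + 2)) : ℕ) ≤ m := by simp
      simp only [dif_neg hlast]
    · intro i
      by_cases hi : (i : ℕ) < m
      · have h1 : ((i.castSucc : Fin (m + 2)) : ℕ) ≤ m := by
          simp [Fin.castSucc]; omega
        have h2 : ((i.succ : Fin (m + 2)) : ℕ) ≤ m := by simp [Fin.val_succ]; omega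
        simp only [dif_pos h1, dif_pos h2]
        have := hs ⟨(i : ℕ), hi⟩
        convert this using 2 <;> exact Fin.ext (by simp [Fin.val_succ])
      · have him : (i : ℕ) = m := by omega
        have h1 : ((i.castSucc : Fin (m + 2)) : ℕ) ≤ m := by
          simp [Fin.castSucc]; omega
        have h2 : ¬ ((i.succ : Fin (m + 2)) : ℕ) ≤ m := by simp [Fin.val_succ]; omega
        simp only [dif_pos h1, dif_neg h2]
        have hGG : c ⟨((i.castSucc : Fin (m + 2)) : ℕ), by omega⟩ = G' := by
          rw [← hl]; congr 1; exact Fin.ext (by simp [him])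
        rw [hGG]
        exact hstep

end Chains

/-! ### Main theorem -/

section Main

open IntermediateField

lemma hasLevelLE_one_of_radical (k K L : Type u) [Field k] [Field K] [Field L]
    [Algebra k K] [Algebra K L] (hrad : IsRadicalExtension K L) :
    HasLevelLE k K L 1 := by
  obtain ⟨M, _, _, f, m, c, hc, h0, htop, hstep⟩ := hrad
  letI : Algebra k M := ((algebraMap K M).comp (algebraMap k K)).toAlgebra
  haveI : IsScalarTower k K M := IsScalarTower.of_algebraMap_eq fun x => rfl
  -- reflexive-transitive chain of good steps from bottom to top
  have key : ∀ i : ℕ, ∀ hi : i ≤ m,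
      Relation.ReflTransGen (GoodStep k) ((c 0).restrictScalars k)
        ((c ⟨i, by omega⟩).restrictScalars k) := by
    intro i
    induction i with
    | zero => intro hi; exact Relation.ReflTransGen.refl
    | succ i ih =>
      intro hi
      have hi' : i ≤ m := by omega
      refine (ih hi').tail ?_
      obtain ⟨l, n, hn, hpow, hsup⟩ := hstep ⟨i, by omega⟩
      have hcast : (⟨i, by omega⟩ : Fin m).castSucc = ⟨i, by omega⟩ := rfl
      have hsucc : (⟨i, by omega⟩ : Fin m).succ = ⟨i + 1, by omega⟩ := rfl
      rw [hcast] at hpow hsup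
      rw [hsucc] at hsup
      have : (c ⟨i + 1, by omega⟩).restrictScalars k =
          (c ⟨i, by omega⟩).restrictScalars k ⊔ IntermediateField.adjoin k {l} := by
        rw [hsup]
        exact restrictScalars_sup_adjoin _ _
      rw [this]
      exact goodStep_of_pow_mem _ l n hn hpow
  have hchain := key m le_rfl
  have hfix : (⟨m, by omega⟩ : Fin (m + 1)) = Fin.last m := rfl
  rw [hfix] at hchain
  obtain ⟨m', c', hc', h0', hl', hs'⟩ := exists_chain_of_reflTransGen hchain
  refine ⟨M, inferInstance, inferInstance, inferInstance, inferInstance, f, m', c', hc', ?_, ?_, ?_⟩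
  · rw [h0', h0]
    ext x
    constructor
    · intro hx
      obtain ⟨y, hy⟩ := IntermediateField.mem_bot.1 hx
      exact ⟨y, hy⟩
    · rintro ⟨y, rfl⟩
      exact IntermediateField.mem_bot.2 ⟨y, rfl⟩
  · intro x
    rw [hl']
    exact htop x
  · intro i
    obtain ⟨h, hfd, hed⟩ := hs' i
    exact ⟨hfd, hed⟩

/-- If the finite extension `L/K` (with `k ⊆ K`) is radical, or in particular
purely inseparable, then `lev_k(L/K) ≤ 1`. -/
theorem statement_11 (k K L : Type u) [Field k] [Field K] [Field L]
    [Algebra k K] [Algebra K L] [FiniteDimensional K L] :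
    (IsRadicalExtension K L → lev k K L ≤ 1) ∧
    (IsPurelyInseparable K L → lev k K L ≤ 1) := by
  have main : IsRadicalExtension K L → lev k K L ≤ 1 := by
    intro hrad
    exact csInf_le (OrderBot.bddBelow _) (hasLevelLE_one_of_radical k K L hrad)
  refine ⟨main, fun hpi => main ?_⟩
  -- purely inseparable extensions are radical
  haveI := hpi
  obtain ⟨p, hp⟩ := ExpChar.exists K
  obtain ⟨s, hs⟩ := Module.Finite.fg_top (R := K) (M := L)
  have hppos : 0 < p := by
    cases hp with
    | zero => exact Nat.one_pos
    | prime hpr => exact hpr.pos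
  refine ⟨L, inferInstance, inferInstance, AlgHom.id K L, s.toList.length,
    fun i => IntermediateField.adjoin K {x | x ∈ s.toList.take (i : ℕ)}, ?_, ?_, ?_, ?_⟩
  · intro i j hij
    apply IntermediateField.adjoin.mono
    intro x hx
    have h1 : s.toList.take (i : ℕ) = (s.toList.take (j : ℕ)).take (i : ℕ) := by
      rw [List.take_take, min_eq_left (Fin.le_def.mp hij)]
    simp only [Set.mem_setOf_eq] at hx ⊢
    rw [h1] at hx
    exact List.take_subset _ _ hx
  · show IntermediateField.adjoin K
        {x | x ∈ s.toList.take ((0 : Fin (s.toList.length + 1)) : ℕ)} = ⊥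
    have hz : ((0 : Fin (s.toList.length + 1)) : ℕ) = 0 := rfl
    rw [hz, List.take_zero]
    have hempty : {x : L | x ∈ ([] : List L)} = (∅ : Set L) := by
      ext z; simp
    rw [hempty]
    exact IntermediateField.adjoin_empty K L
  · intro x
    have hlast : ((Fin.last s.toList.length) : ℕ) = s.toList.length := rfl
    show x ∈ IntermediateField.adjoin K {y | y ∈ s.toList.take ((Fin.last s.toList.length : Fin (s.toList.length + 1)) : ℕ)}
    rw [hlast, List.take_length]
    have hx : x ∈ Submodule.span K (↑s : Set L) := by rw [hs]; trivial
    have hsub : Submodule.span K (↑s : Set L) ≤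
        Subalgebra.toSubmodule (IntermediateField.adjoin K {y | y ∈ s.toList}).toSubalgebra := by
      rw [Submodule.span_le]
      intro y hy
      exact IntermediateField.subset_adjoin K _ (by simpa [Finset.mem_toList] using hy)
    exact hsub hx
  · intro i
    obtain ⟨e, he⟩ := IsPurelyInseparable.pow_mem K p (s.toList.get i)
    refine ⟨s.toList.get i, p ^ e, Nat.one_le_pow _ _ hppos, ?_, ?_⟩
    · have : s.toList.get i ^ p ^ e ∈ (⊥ : IntermediateField K L) := by
        rw [IntermediateField.mem_bot]
        obtain ⟨y, hy⟩ := he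
        exact ⟨y, hy⟩
      exact (bot_le : (⊥ : IntermediateField K L) ≤ _) this
    · have hset : {x : L | x ∈ s.toList.take ((i.succ : Fin (s.toList.length + 1)) : ℕ)} =
          {x : L | x ∈ s.toList.take ((i.castSucc : Fin (s.toList.length + 1)) : ℕ)} ∪
            {s.toList.get i} := by
        ext z
        have hival : ((i.succ : Fin (s.toList.length + 1)) : ℕ) = (i : ℕ) + 1 := rfl
        have hival2 : ((i.castSucc : Fin (s.toList.length + 1)) : ℕ) = (i : ℕ) := rfl
        rw [hival, hival2]
        simp only [Set.mem_setOf_eq, Set.mem_union, Set.mem_singleton_iff,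
          List.take_succ, List.mem_append]
        constructor
        · rintro (h | h)
          · exact Or.inl h
          · right
            have : s.toList[(i : ℕ)]? = some (s.toList.get i) := by
              rw [List.getElem?_eq_getElem i.isLt]
              simp [List.get_eq_getElem]
            rw [this] at h
            simpa using h
        · rintro (h | h)
          · exact Or.inl h
          · right
            have : s.toList[(i : ℕ)]? = some (s.toList.get i) := by
              rw [List.getElem?_eq_getElem i.isLt]
              simp [List.get_eq_getElem]
            rw [this]
            simpa using h
      show IntermediateField.adjoin K _ = _
      rw [hset, IntermediateField.adjoin_union]
end Main
end
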